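/- arXiv:0802.2769 — 4 statements merged into one kernel-verified Lean document; each statement's English description precedes it below -/
import Mathlib

section
/- Let I ⊂ S be a monomial ideal with dim S/I = d, and let g ∈ ℕ^n satisfy g ≥ a for every exponent vector a of a minimal generator of I. Then for every b ∈ ℕ^n with x^b ∉ I, the number ρ(b) = |{j : b(j) = g(j)}| satisfies ρ(b) ≤ d. -/
open MvPolynomial

/-- The monomial `x^c = x_1^{c 1} ⋯ x_n^{c n}` in `K[x_1,…,x_n]`. -/
noncomputable def monX (n : ℕ) (K : Type*) [Field K] (c : Fin n → ℕ) :
    MvPolynomial (Fin n) K := ∏ i, X i ^ c i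

/-- `ρ(b) = |{k : b k = g k}|`. -/
def rho {n : ℕ} (g b : Fin n → ℕ) : ℕ := (Finset.univ.filter fun k => b k = g k).card

/-- The `j`-th skeleton ideal of `I` with respect to `g`: the ideal generated by `I`
together with all monomials `x^b` with `ρ(b) > j`. -/
noncomputable def skel {n : ℕ} (K : Type*) [Field K]
    (I : Ideal (MvPolynomial (Fin n) K)) (g : Fin n → ℕ) (j : ℕ) :
    Ideal (MvPolynomial (Fin n) K) :=
  I ⊔ Ideal.span {m | ∃ b : Fin n → ℕ, j < rho g b ∧ m = monX n K b}

/-- The characteristic poset `P^g_{S/I} = {b ∈ ℕ^n : b ≤ g, x^b ∉ I}`. -/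
def charPoset {n : ℕ} (K : Type*) [Field K]
    (I : Ideal (MvPolynomial (Fin n) K)) (g : Fin n → ℕ) : Set (Fin n → ℕ) :=
  {b | b ≤ g ∧ monX n K b ∉ I}

/-- The characteristic poset `P^g_{J/I} = {b ∈ ℕ^n : b ≤ g, x^b ∈ J \ I}`. -/
def charPoset2 {n : ℕ} (K : Type*) [Field K]
    (I J : Ideal (MvPolynomial (Fin n) K)) (g : Fin n → ℕ) : Set (Fin n → ℕ) :=
  {b | b ≤ g ∧ monX n K b ∈ J ∧ monX n K b ∉ I}

/-- The graded maximal ideal `m = (x_1,…,x_n)`. -/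
noncomputable def mxId (n : ℕ) (K : Type*) [Field K] : Ideal (MvPolynomial (Fin n) K) :=
  Ideal.span (Set.range (X : Fin n → MvPolynomial (Fin n) K))

/-- The depth of a module over `S = K[x_1,…,x_n]` with respect to the graded
maximal ideal: the supremum of lengths of regular sequences contained in `m`. -/
noncomputable def mdepth (n : ℕ) (K : Type*) [Field K] (M : Type*) [AddCommGroup M]
    [Module (MvPolynomial (Fin n) K) M] : ℕ :=
  sSup {r | ∃ rs : List (MvPolynomial (Fin n) K), rs.length = r ∧
    (∀ x ∈ rs, x ∈ mxId n K) ∧ RingTheory.Sequence.IsRegular M rs}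

/-- Krull dimension of a module: `dim S/ann M`. -/
noncomputable def mdim (n : ℕ) (K : Type*) [Field K] (M : Type*) [AddCommGroup M]
    [Module (MvPolynomial (Fin n) K) M] : WithBot (WithTop ℕ) :=
  ringKrullDim (MvPolynomial (Fin n) K ⧸ Module.annihilator (MvPolynomial (Fin n) K) M)

/-- `M` is a Cohen–Macaulay `S`-module of dimension `j`. -/
noncomputable def IsCMof (n : ℕ) (K : Type*) [Field K] (M : Type*) [AddCommGroup M]
    [Module (MvPolynomial (Fin n) K) M] (j : ℕ) : Prop :=
  mdepth n K M = j ∧ mdim n K M = (j : WithBot (WithTop ℕ))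

/-- `M` is a Cohen–Macaulay `S`-module (depth = Krull dimension). -/
noncomputable def IsCM (n : ℕ) (K : Type*) [Field K] (M : Type*) [AddCommGroup M]
    [Module (MvPolynomial (Fin n) K) M] : Prop :=
  (mdepth n K M : WithBot (WithTop ℕ)) = mdim n K M

/-- A partition of a subset `P` of `ℕ^n` into (nonempty) intervals `[cᵢ, dᵢ]`. -/
structure IntervalPartition {n : ℕ} (P : Set (Fin n → ℕ)) where
  r : ℕ
  c : Fin r → (Fin n → ℕ)
  d : Fin r → (Fin n → ℕ)
  le : ∀ i, c i ≤ d i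
  cover : P = ⋃ i, Set.Icc (c i) (d i)
  disj : Pairwise (Function.onFun Disjoint fun i => Set.Icc (c i) (d i))

/-- The (combinatorial) Stanley depth of `S/I`: the maximum over interval partitions
of the characteristic poset `P^g_{S/I}` of `min_i ρ(dᵢ)` (Herzog–Vladoiu–Zheng). -/
noncomputable def sdepthQ {n : ℕ} (K : Type*) [Field K]
    (I : Ideal (MvPolynomial (Fin n) K)) (g : Fin n → ℕ) : ℕ :=
  sSup {t | ∃ P : IntervalPartition (charPoset K I g), ∀ i, t ≤ rho g (P.d i)}

/-- The set of exponents `{c + e : supp e ⊆ Z}`, i.e. the exponents of the monomials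
spanning the Stanley space `x^c K[Z]`. -/
def orth {n : ℕ} (c : Fin n → ℕ) (Z : Finset (Fin n)) : Set (Fin n → ℕ) :=
  {b | c ≤ b ∧ ∀ k ∉ Z, b k = c k}

/-- A Stanley decomposition of `J/I` (for monomial ideals `I ⊆ J`), encoded by the
induced partition of the monomial `K`-basis of `J/I` into Stanley spaces `x^{cᵢ} K[Zᵢ]`. -/
structure StanleyDec {n : ℕ} (K : Type*) [Field K]
    (I J : Ideal (MvPolynomial (Fin n) K)) where
  r : ℕ
  c : Fin r → (Fin n → ℕ)
  Z : Fin r → Finset (Fin n)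
  cover : {b | monX n K b ∈ J ∧ monX n K b ∉ I} = ⋃ i, orth (c i) (Z i)
  disj : Pairwise (Function.onFun Disjoint fun i => orth (c i) (Z i))

/-- The `h`-regularity of `J/I`: the minimum over Stanley decompositions of `max_i |cᵢ|`. -/
noncomputable def hregQ {n : ℕ} (K : Type*) [Field K]
    (I J : Ideal (MvPolynomial (Fin n) K)) : ℕ :=
  sInf {h | ∃ D : StanleyDec K I J, ∀ i, (∑ k, D.c i k) ≤ h}

/-- `σ(Pt) = max_i max{|c| : c ∈ [cᵢ,dᵢ], c k = cᵢ k for all k with dᵢ k = g k}`. -/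
noncomputable def sigmaP {n : ℕ} (g : Fin n → ℕ) {P : Set (Fin n → ℕ)}
    (Pt : IntervalPartition P) : ℕ :=
  sSup {s | ∃ i : Fin Pt.r, ∃ cc ∈ Set.Icc (Pt.c i) (Pt.d i),
    (∀ k, Pt.d i k = g k → cc k = Pt.c i k) ∧ s = ∑ k, cc k}

/-- The truncation `I_{≥ j}`: the ideal generated by all homogeneous elements of `I`
of degree at least `j`. -/
noncomputable def trunc {n : ℕ} (K : Type*) [Field K]
    (I : Ideal (MvPolynomial (Fin n) K)) (j : ℕ) : Ideal (MvPolynomial (Fin n) K) :=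
  Ideal.span {f | f ∈ I ∧ ∃ d, j ≤ d ∧ MvPolynomial.IsHomogeneous f d}

/-- A `d`-linear (graded free) resolution of the ideal `I`: a finite exact complex of
finite free modules augmented to `I`, in which the entries of the augmentation are
homogeneous of degree `d` and all entries of the differentials are linear forms. -/
structure LinearRes {n : ℕ} (K : Type*) [Field K]
    (I : Ideal (MvPolynomial (Fin n) K)) (d : ℕ) where
  len : ℕ
  b : ℕ → ℕ
  fin : ∀ i, len < i → b i = 0
  ε : (Fin (b 0) →₀ MvPolynomial (Fin n) K) →ₗ[MvPolynomial (Fin n) K]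
      MvPolynomial (Fin n) K
  δ : ∀ i : ℕ, (Fin (b (i+1)) →₀ MvPolynomial (Fin n) K) →ₗ[MvPolynomial (Fin n) K]
      (Fin (b i) →₀ MvPolynomial (Fin n) K)
  hε : ∀ j, MvPolynomial.IsHomogeneous (ε (Finsupp.single j 1)) d
  hδ : ∀ i j k, MvPolynomial.IsHomogeneous ((δ i (Finsupp.single j 1)) k) 1
  surj : LinearMap.range ε = (I : Submodule (MvPolynomial (Fin n) K) (MvPolynomial (Fin n) K))
  exact0 : LinearMap.ker ε = LinearMap.range (δ 0)
  exact : ∀ i, LinearMap.ker (δ i) = LinearMap.range (δ (i+1))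

/-- The Castelnuovo–Mumford regularity of `I`, via the Eisenbud–Goto characterization
`reg(I) = min{d : I_{≥ d} has a d-linear resolution}`. -/
noncomputable def regEG {n : ℕ} (K : Type*) [Field K]
    (I : Ideal (MvPolynomial (Fin n) K)) : ℕ :=
  sInf {d | Nonempty (LinearRes K (trunc K I d) d)}

/-! Let `τ = {k : b k = g k}`. Since `x^b ∉ I` and every `a i ≤ g`, each generator `x^(a i)`
involves a variable outside `τ`; hence setting those variables to `0` kills `I`, and `S/I`
surjects onto `K[x_k : k ∈ τ]`, whose dimension is `|τ| = ρ(b)`. -/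

lemma monX_dvd_monX {n : ℕ} (K : Type*) [Field K] {a b : Fin n → ℕ} (hab : a ≤ b) :
    monX n K a ∣ monX n K b :=
  Finset.prod_dvd_prod_of_dvd _ _ fun k _ => pow_dvd_pow _ (hab k)

lemma killCompl_monX_eq_zero {n : ℕ} (K : Type*) [Field K] {τ : Type*} {f : τ → Fin n}
    (hf : Function.Injective f) {c : Fin n → ℕ} {k : Fin n} (hk : k ∉ Set.range f)
    (hck : c k ≠ 0) : killCompl hf (monX n K c) = 0 := by
  classical
  rw [monX, map_prod]
  refine Finset.prod_eq_zero (Finset.mem_univ k) ?_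
  rw [map_pow, killCompl, aeval_X, dif_neg hk, zero_pow hck]

lemma natCard_le_ringKrullDim_mvPolynomial (σ : Type*) [Finite σ] (K : Type*) [Field K] :
    (Nat.card σ : WithBot ℕ∞) ≤ ringKrullDim (MvPolynomial σ K) :=
  le_of_eq_of_le (by simp [ringKrullDim_eq_zero_of_field])
    (ringKrullDim_add_natCard_le_ringKrullDim_mvPolynomial (R := K) σ)

lemma ringKrullDim_le_ringKrullDim_quotient {R S : Type*} [CommRing R] [CommRing S]
    (f : R →+* S) (hf : Function.Surjective f) {I : Ideal R} (hI : I ≤ RingHom.ker f) :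
    ringKrullDim S ≤ ringKrullDim (R ⧸ I) :=
  ringKrullDim_le_of_surjective (Ideal.Quotient.lift I f hI)
    (Ideal.Quotient.lift_surjective_of_surjective I hI hf)

lemma exists_ne_and_ne_zero_of_monX_notMem {n m : ℕ} (K : Type*) [Field K]
    {a : Fin m → Fin n → ℕ} {g b : Fin n → ℕ} (hg : ∀ i, a i ≤ g)
    (hb : monX n K b ∉ Ideal.span (Set.range fun i => monX n K (a i))) (i : Fin m) :
    ∃ k, b k ≠ g k ∧ a i k ≠ 0 := by
  by_contra! h
  have hab : a i ≤ b := fun k => by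
    by_cases hk : b k = g k
    · exact hk ▸ hg i k
    · simp [h k hk]
  exact hb (Ideal.mem_of_dvd _ (monX_dvd_monX K hab) (Ideal.subset_span ⟨i, rfl⟩))

theorem rho_le_dim_general (n m : ℕ) (K : Type*) [Field K]
    (a : Fin m → (Fin n → ℕ)) (I : Ideal (MvPolynomial (Fin n) K))
    (hI : I = Ideal.span (Set.range fun i => monX n K (a i)))
    (g : Fin n → ℕ) (hg : ∀ i, a i ≤ g)
    (d : ℕ) (hd : ringKrullDim (MvPolynomial (Fin n) K ⧸ I) = (d : WithBot (WithTop ℕ))) :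
    ∀ b : Fin n → ℕ, monX n K b ∉ I → rho g b ≤ d := by
  intro b hb
  let f : {k // b k = g k} → Fin n := Subtype.val
  have hf : Function.Injective f := Subtype.val_injective
  have hker : I ≤ RingHom.ker (killCompl (R := K) hf) := by
    rw [hI, Ideal.span_le]
    rintro _ ⟨i, rfl⟩
    obtain ⟨k, hbk, hak⟩ := exists_ne_and_ne_zero_of_monX_notMem K hg (hI ▸ hb) i
    exact killCompl_monX_eq_zero K hf (by simp [f, hbk]) hak
  have hρ : (rho g b : WithBot ℕ∞) ≤ d := calc
    (rho g b : WithBot ℕ∞) = Nat.card {k // b k = g k} := by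
      rw [Nat.card_eq_fintype_card, Fintype.card_subtype, rho]
    _ ≤ ringKrullDim (MvPolynomial {k // b k = g k} K) :=
      natCard_le_ringKrullDim_mvPolynomial _ K
    _ ≤ ringKrullDim (MvPolynomial (Fin n) K ⧸ I) :=
      ringKrullDim_le_ringKrullDim_quotient (killCompl hf).toRingHom
        (fun p => ⟨rename f p, killCompl_rename_app hf p⟩) hker
    _ = d := hd
  exact_mod_cast hρ

/-- if `dim S/I = d` and `g` dominates the minimal generator exponents
of `I`, then `ρ(b) ≤ d` for every `b` with `x^b ∉ I`. -/
theorem rho_le_dim (n m : ℕ) (K : Type*) [Field K]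
    (a : Fin m → (Fin n → ℕ)) (I : Ideal (MvPolynomial (Fin n) K))
    (hI : I = Ideal.span (Set.range fun i => monX n K (a i)))
    (hmin : ∀ i j, i ≠ j → ¬ a i ≤ a j)
    (g : Fin n → ℕ) (hg : ∀ i, a i ≤ g)
    (d : ℕ) (hd : ringKrullDim (MvPolynomial (Fin n) K ⧸ I) = (d : WithBot (WithTop ℕ))) :
    ∀ b : Fin n → ℕ, monX n K b ∉ I → rho g b ≤ d :=
  rho_le_dim_general n m K a I hI g hg d hd
end

section
/- Let A = {b ∈ P^g_{S/I} : ρ(b) = d} where d = dim S/I, and for a subset Z ⊆ {x_1,...,x_n} let A_Z = {b ∈ A : Z_b = Z}, where Z_b = {x_k : b(k) = g(k)}. If b, b' ∈ A_Z then b ∧ b' ∈ A_Z; consequently A_Z has a unique minimal element. -/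
open MvPolynomial

/-! Everything is inherited by meets: `b ⊓ b' ≤ b` and `x^{b ⊓ b'} ∣ x^b`, so `x^{b ⊓ b'} ∉ I`
as soon as `x^b ∉ I`; and below `g` a meet attains `g k` exactly where both arguments do, so
`b ⊓ b'` has the same set `Z` of maximal coordinates, hence the same `ρ`. A minimal element of
the inf-closed set `A_Z` (which exists since `ℕ^n` is well founded) is then its least element. -/

theorem InfClosed.exists_isLeast {α : Type*} [SemilatticeInf α] [WellFoundedLT α] {s : Set α}
    (hs : InfClosed s) (hne : s.Nonempty) : ∃ a, IsLeast s a := by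
  obtain ⟨a, ha, hmin⟩ := wellFounded_lt.has_min s hne
  exact ⟨a, ha, fun b hb => inf_eq_left.mp (inf_le_left.eq_of_not_lt (hmin _ (hs ha hb)))⟩

section Exponents

variable {n : ℕ}

theorem monX_dvd_monX_of_le (K : Type*) [Field K] {b c : Fin n → ℕ} (h : b ≤ c) :
    monX n K b ∣ monX n K c :=
  Finset.prod_dvd_prod_of_dvd _ _ fun i _ => pow_dvd_pow _ (h i)

theorem isLowerSet_charPoset (K : Type*) [Field K] (I : Ideal (MvPolynomial (Fin n) K))
    (g : Fin n → ℕ) : IsLowerSet (charPoset K I g) :=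
  fun _ _ hcb ⟨hbg, hbI⟩ =>
    ⟨hcb.trans hbg, fun hc => hbI (I.mem_of_dvd (monX_dvd_monX_of_le K hcb) hc)⟩

theorem setOf_inf_apply_eq {g b b' : Fin n → ℕ} (hb : b ≤ g) (hb' : b' ≤ g) :
    {k | (b ⊓ b') k = g k} = {k | b k = g k} ∩ {k | b' k = g k} := by
  refine Set.ext fun k => ?_
  show min (b k) (b' k) = g k ↔ b k = g k ∧ b' k = g k
  have hbk : b k ≤ g k := hb k
  have hbk' : b' k ≤ g k := hb' k
  omega

theorem rho_congr {g b c : Fin n → ℕ} (h : {k | b k = g k} = {k | c k = g k}) :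
    rho g b = rho g c := by
  unfold rho
  congr 1
  ext k
  simpa using Set.ext_iff.mp h k

theorem infClosed_charPoset_rho_eq_setOf_eq (K : Type*) [Field K]
    (I : Ideal (MvPolynomial (Fin n) K)) (g : Fin n → ℕ) (d : ℕ) (Z : Set (Fin n)) :
    InfClosed {b | b ∈ charPoset K I g ∧ rho g b = d ∧ {k | b k = g k} = Z} := by
  rintro b ⟨hb, hρ, hZ⟩ b' ⟨hb', -, hZ'⟩
  have hZinf : {k | (b ⊓ b') k = g k} = Z := by
    rw [setOf_inf_apply_eq hb.1 hb'.1, hZ, hZ', Set.inter_self]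
  exact ⟨isLowerSet_charPoset K I g inf_le_left hb,
    (rho_congr (hZinf.trans hZ.symm)).trans hρ, hZinf⟩

end Exponents

theorem AZ_meet_closed_general (n : ℕ) (K : Type*) [Field K]
    (I : Ideal (MvPolynomial (Fin n) K))
    (g : Fin n → ℕ)
    (d : ℕ) (Z : Set (Fin n)) :
    (∀ b ∈ {b | b ∈ charPoset K I g ∧ rho g b = d ∧ {k | b k = g k} = Z},
     ∀ b' ∈ {b | b ∈ charPoset K I g ∧ rho g b = d ∧ {k | b k = g k} = Z},
       (fun k => min (b k) (b' k)) ∈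
         {b | b ∈ charPoset K I g ∧ rho g b = d ∧ {k | b k = g k} = Z}) ∧
    ({b | b ∈ charPoset K I g ∧ rho g b = d ∧ {k | b k = g k} = Z}.Nonempty →
      ∃! b₀, b₀ ∈ {b | b ∈ charPoset K I g ∧ rho g b = d ∧ {k | b k = g k} = Z} ∧
        ∀ b ∈ {b | b ∈ charPoset K I g ∧ rho g b = d ∧ {k | b k = g k} = Z}, b₀ ≤ b) := by
  have hA := infClosed_charPoset_rho_eq_setOf_eq K I g d Z
  refine ⟨fun b hb b' hb' => hA hb hb', fun hne => ?_⟩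
  obtain ⟨b₀, hb₀⟩ := hA.exists_isLeast hne
  exact ⟨b₀, hb₀, fun b (hb : IsLeast _ b) => hb.unique hb₀⟩

/-- for `A = {b ∈ P^g_{S/I} : ρ(b) = d}` and a subset `Z` of indices,
the set `A_Z = {b ∈ A : Z_b = Z}` is closed under componentwise meets; consequently,
if nonempty, it has a unique minimal element. -/
theorem AZ_meet_closed (n m : ℕ) (K : Type*) [Field K]
    (a : Fin m → (Fin n → ℕ)) (I : Ideal (MvPolynomial (Fin n) K))
    (hI : I = Ideal.span (Set.range fun i => monX n K (a i)))
    (hmin : ∀ i j, i ≠ j → ¬ a i ≤ a j)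
    (g : Fin n → ℕ) (hg : ∀ i, a i ≤ g)
    (d : ℕ) (hd : ringKrullDim (MvPolynomial (Fin n) K ⧸ I) = (d : WithBot (WithTop ℕ))) (Z : Set (Fin n)) :
    (∀ b ∈ {b | b ∈ charPoset K I g ∧ rho g b = d ∧ {k | b k = g k} = Z},
     ∀ b' ∈ {b | b ∈ charPoset K I g ∧ rho g b = d ∧ {k | b k = g k} = Z},
       (fun k => min (b k) (b' k)) ∈
         {b | b ∈ charPoset K I g ∧ rho g b = d ∧ {k | b k = g k} = Z}) ∧
    ({b | b ∈ charPoset K I g ∧ rho g b = d ∧ {k | b k = g k} = Z}.Nonempty →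
      ∃! b₀, b₀ ∈ {b | b ∈ charPoset K I g ∧ rho g b = d ∧ {k | b k = g k} = Z} ∧
        ∀ b ∈ {b | b ∈ charPoset K I g ∧ rho g b = d ∧ {k | b k = g k} = Z}, b₀ ≤ b) :=
  AZ_meet_closed_general n K I g d Z
end

section
/- In the setting of Theorem on skeletons: let b_i be the minimal element of A_i = {b ∈ A : Z_b = Z_i} (A = {b ∈ P^g_{S/I} : ρ(b) = d}), and let f_i = x^{b_i} + I ∈ J/I where J = (I, {x^b : b ∈ A}). If a monomial x^c with c = c_1 + c_2, supp(c_1) ⊆ Z_{b_i} and supp(c_2) ⊆ Y_{b_i}, annihilates f_i, then already x^{c_2} annihilates f_i. Hence Ann(S f_i) is generated by monomials in the variables Y_{b_i}. -/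
open MvPolynomial

/-! The colon ideal `I : x^b` of a monomial ideal is the monomial ideal spanned by the `x^t`
with `x^(b + t) ∈ I`. Every generator `x^(a_j)` of `I` divides `x^g`, and `b` already agrees
with `g` on `Z_b`, so raising exponents of the variables in `Z_b` never helps to bring
`x^(b + t)` into `I`: each such `t` may be replaced by its restriction to `Y_b`. -/

section MonomialIdeal

variable {n : ℕ} {K : Type*} [Field K]

lemma monomial_one_eq_monX (s : Fin n →₀ ℕ) : monomial s (1 : K) = monX n K s := by
  classical
  rw [monX, monomial_eq, C_1, one_mul, Finsupp.prod_fintype _ _ fun i => pow_zero _]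

lemma monX_eq_monomial (c : Fin n → ℕ) :
    monX n K c = monomial (Finsupp.equivFunOnFinite.symm c) 1 := by
  rw [monomial_one_eq_monX, Finsupp.coe_equivFunOnFinite_symm]

lemma monX_add (u v : Fin n → ℕ) : monX n K (u + v) = monX n K u * monX n K v := by
  simp only [monX, Pi.add_apply, pow_add, Finset.prod_mul_distrib]

lemma mem_span_monX_image_iff {A : Set (Fin n → ℕ)} {f : MvPolynomial (Fin n) K} :
    f ∈ Ideal.span (monX n K '' A) ↔ ∀ s ∈ f.support, ∃ a ∈ A, a ≤ ⇑s := by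
  have hA : monX n K '' A =
      (fun s => monomial s (1 : K)) '' (Finsupp.equivFunOnFinite.symm '' A) := by
    rw [Set.image_image]
    exact Set.image_congr fun a _ => by rw [monomial_one_eq_monX, Finsupp.coe_equivFunOnFinite_symm]
  rw [hA, mem_ideal_span_monomial_image]
  simp only [Set.exists_mem_image, ← Finsupp.coe_le_coe, Finsupp.coe_equivFunOnFinite_symm]

lemma monX_mem_span_monX_image_iff {A : Set (Fin n → ℕ)} {e : Fin n → ℕ} :
    monX n K e ∈ Ideal.span (monX n K '' A) ↔ ∃ a ∈ A, a ≤ e := by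
  classical
  rw [monX_eq_monomial, mem_span_monX_image_iff, support_monomial, if_neg one_ne_zero]
  simp only [Finset.mem_singleton, forall_eq, Finsupp.coe_equivFunOnFinite_symm]

lemma span_monX_image_le_iff {S T : Set (Fin n → ℕ)} :
    Ideal.span (monX n K '' S) ≤ Ideal.span (monX n K '' T) ↔ ∀ s ∈ S, ∃ t ∈ T, t ≤ s := by
  simp only [Ideal.span_le, Set.image_subset_iff]
  exact forall₂_congr fun s _ => monX_mem_span_monX_image_iff

lemma colon_span_monX_image (A : Set (Fin n → ℕ)) (b : Fin n → ℕ) :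
    Submodule.colon (Ideal.span (monX n K '' A) : Submodule (MvPolynomial (Fin n) K) _)
        (Submodule.span (MvPolynomial (Fin n) K) {monX n K b}) =
      Ideal.span (monX n K '' {t | monX n K (b + t) ∈ Ideal.span (monX n K '' A)}) := by
  apply le_antisymm
  · intro f hf
    rw [Submodule.mem_colon_span_singleton, smul_eq_mul] at hf
    rw [mem_span_monX_image_iff] at hf ⊢
    intro s hs
    refine ⟨s, monX_mem_span_monX_image_iff.mpr ?_, le_rfl⟩
    have hshift : s + Finsupp.equivFunOnFinite.symm b ∈ (f * monX n K b).support := by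
      rwa [mem_support_iff, monX_eq_monomial, coeff_mul_monomial, mul_one, ← mem_support_iff]
    obtain ⟨a, ha, hle⟩ := hf _ hshift
    exact ⟨a, ha, by simpa [add_comm] using hle⟩
  · rw [Ideal.span_le]
    rintro _ ⟨t, ht, rfl⟩
    rw [SetLike.mem_coe, Submodule.mem_colon_span_singleton, smul_eq_mul, ← monX_add, add_comm]
    exact ht

lemma monX_mem_of_add_mem {A : Set (Fin n → ℕ)} {g e c : Fin n → ℕ} (hA : ∀ a ∈ A, a ≤ g)
    (hc : ∀ k, c k ≠ 0 → g k ≤ e k) (h : monX n K (e + c) ∈ Ideal.span (monX n K '' A)) :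
    monX n K e ∈ Ideal.span (monX n K '' A) := by
  rw [monX_mem_span_monX_image_iff] at h ⊢
  obtain ⟨a, ha, hle⟩ := h
  refine ⟨a, ha, fun k => ?_⟩
  by_cases hck : c k = 0
  · simpa [hck] using hle k
  · exact (hA a ha k).trans (hc k hck)

end MonomialIdeal

theorem annihilator_in_Y_general (n m : ℕ) (K : Type*) [Field K]
    (a : Fin m → (Fin n → ℕ)) (I : Ideal (MvPolynomial (Fin n) K))
    (hI : I = Ideal.span (Set.range fun i => monX n K (a i)))
    (g : Fin n → ℕ) (hg : ∀ i, a i ≤ g)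
    (b : Fin n → ℕ) :
    (∀ c₁ c₂ : Fin n → ℕ, (∀ k, c₁ k ≠ 0 → b k = g k) → (∀ k, c₂ k ≠ 0 → b k ≠ g k) →
        monX n K (b + c₁ + c₂) ∈ I → monX n K (b + c₂) ∈ I) ∧
    ∃ T : Set (Fin n → ℕ), (∀ t ∈ T, ∀ k, t k ≠ 0 → b k ≠ g k) ∧
      Submodule.colon (I : Submodule (MvPolynomial (Fin n) K) (MvPolynomial (Fin n) K))
          (Submodule.span (MvPolynomial (Fin n) K) {monX n K b}) = Ideal.span (monX n K '' T) := by
  replace hI : I = Ideal.span (monX n K '' Set.range a) := by rw [hI, ← Set.range_comp]; rfl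
  subst hI
  have hA : ∀ a' ∈ Set.range a, a' ≤ g := Set.forall_mem_range.mpr hg
  have drop_Z : ∀ c₁ c₂ : Fin n → ℕ, (∀ k, c₁ k ≠ 0 → b k = g k) →
      monX n K (b + c₁ + c₂) ∈ Ideal.span (monX n K '' Set.range a) →
      monX n K (b + c₂) ∈ Ideal.span (monX n K '' Set.range a) := fun c₁ c₂ h₁ h => by
    rw [add_right_comm] at h
    exact monX_mem_of_add_mem hA (fun k hk => (h₁ k hk).ge.trans le_self_add) h
  refine ⟨fun c₁ c₂ h₁ _ => drop_Z c₁ c₂ h₁,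
    {t | (∀ k, t k ≠ 0 → b k ≠ g k) ∧ monX n K (b + t) ∈ Ideal.span (monX n K '' Set.range a)},
    fun t ht => ht.1, ?_⟩
  rw [colon_span_monX_image]
  refine le_antisymm (span_monX_image_le_iff.mpr fun t ht => ?_)
    (Ideal.span_mono (Set.image_mono fun t ht => ht.2))
  let tY : Fin n → ℕ := fun k => if b k = g k then 0 else t k
  let tZ : Fin n → ℕ := fun k => if b k = g k then t k else 0
  have hsplit : t = tZ + tY := funext fun k => by by_cases hk : b k = g k <;> simp [tZ, tY, hk]
  refine ⟨tY, ⟨fun k hk hbk => hk (if_pos hbk), drop_Z tZ tY (fun k hk => ?_) ?_⟩, ?_⟩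
  · by_contra hbk; exact hk (if_neg hbk)
  · rwa [add_assoc, ← hsplit]
  · exact hsplit ▸ le_add_self

/-- with `b_i` the minimal element of `A_i` and `f_i = x^{b_i} + I`, if a
monomial `x^c` with `c = c₁ + c₂`, `supp c₁ ⊆ Z_{b_i}`, `supp c₂ ⊆ Y_{b_i}`,
annihilates `f_i`, then already `x^{c₂}` annihilates `f_i`; hence the annihilator of
`S f_i` (the colon ideal `I : x^{b_i}`) is generated by monomials in the variables
`Y_{b_i}`. -/
theorem annihilator_in_Y (n m : ℕ) (K : Type*) [Field K]
    (a : Fin m → (Fin n → ℕ)) (I : Ideal (MvPolynomial (Fin n) K))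
    (hI : I = Ideal.span (Set.range fun i => monX n K (a i)))
    (hmin : ∀ i j, i ≠ j → ¬ a i ≤ a j)
    (g : Fin n → ℕ) (hg : ∀ i, a i ≤ g)
    (d : ℕ) (hd : ringKrullDim (MvPolynomial (Fin n) K ⧸ I) = (d : WithBot (WithTop ℕ)))
    (b : Fin n → ℕ) (hb : b ∈ charPoset K I g) (hrho : rho g b = d)
    (hbmin : ∀ b' ∈ charPoset K I g, rho g b' = d →
      {k | b' k = g k} = {k | b k = g k} → b ≤ b') :
    (∀ c₁ c₂ : Fin n → ℕ, (∀ k, c₁ k ≠ 0 → b k = g k) → (∀ k, c₂ k ≠ 0 → b k ≠ g k) →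
        monX n K (b + c₁ + c₂) ∈ I → monX n K (b + c₂) ∈ I) ∧
    ∃ T : Set (Fin n → ℕ), (∀ t ∈ T, ∀ k, t k ≠ 0 → b k ≠ g k) ∧
      Submodule.colon (I : Submodule (MvPolynomial (Fin n) K) (MvPolynomial (Fin n) K))
          (Submodule.span (MvPolynomial (Fin n) K) {monX n K b}) = Ideal.span (monX n K '' T) :=
  annihilator_in_Y_general n m K a I hI g hg b
end

section
/- Let I ⊆ J be monomial ideals and g ∈ ℕ^n dominating all minimal generator exponents of I and J. Then hreg(J/I) = min over partitions P : P^g_{J/I} = ⋃[c_i,d_i] of σ(P), where σ(P) = max_i max{|c| : c ∈ [c_i,d_i], c(j) = c_i(j) for all j with x_j ∈ Z_{d_i}}. In particular hreg(J/I) is computable in finitely many steps. -/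
open MvPolynomial

/-!
Because `g` dominates the generators of `I` and `J`, whether `x^b` lies in `J \ I` depends only
on `b ⊓ g`. Hence an interval `[c, d]` of `P^g_{J/I}` is the trace on `{b ≤ g}` of the disjoint
Stanley spaces `x^{c'} K[Z_d]`, where `c'` runs over the points of `[c, d]` agreeing with `c` on
`Z_d`; the largest `|c'|` is exactly the contribution of `[c, d]` to `σ`. Conversely a Stanley
space `x^c K[Z]` with `c ≤ g` meets `{b ≤ g}` in the interval `[c, d]` with `d = g` on `Z` and
`d = c` off `Z`, in which `c` is the only such point. So each minimum bounds the other.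
-/

lemma Nat.sInf_eq_sInf_of_forall_exists_le {A B : Set ℕ} (hAB : ∀ a ∈ A, ∃ b ∈ B, b ≤ a)
    (hBA : ∀ b ∈ B, ∃ a ∈ A, a ≤ b) : sInf A = sInf B := by
  rcases A.eq_empty_or_nonempty with rfl | hA
  · have hB : B = ∅ := Set.eq_empty_of_forall_notMem fun b hb => by
      obtain ⟨a, ha, -⟩ := hBA b hb
      exact ha
    rw [hB]
  obtain ⟨b₀, hb₀, -⟩ := hAB _ hA.some_mem
  apply le_antisymm
  · obtain ⟨a, ha, hab⟩ := hBA _ (Nat.sInf_mem ⟨b₀, hb₀⟩)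
    exact (Nat.sInf_le ha).trans hab
  · obtain ⟨b, hb, hba⟩ := hAB _ (Nat.sInf_mem hA)
    exact (Nat.sInf_le hb).trans hba

section Monomials

variable {n : ℕ} {K : Type*} [Field K]

lemma monX_mem_span_monX_iff {m : ℕ} (v : Fin m → Fin n → ℕ) (b : Fin n → ℕ) :
    monX n K b ∈ Ideal.span (Set.range fun i => monX n K (v i)) ↔ ∃ i, v i ≤ b := by
  have hrange : (Set.range fun i => monX n K (v i)) =
      (fun s => monomial s (1 : K)) '' Set.range fun i => Finsupp.equivFunOnFinite.symm (v i) := by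
    simp only [monX_eq_monomial, ← Set.range_comp]
    rfl
  rw [monX_eq_monomial, hrange, mem_ideal_span_monomial_image]
  simp [Finsupp.le_def, Pi.le_def]

lemma monX_inf_mem_span_monX_iff {m : ℕ} {v : Fin m → Fin n → ℕ} {g : Fin n → ℕ}
    (hv : ∀ i, v i ≤ g) (b : Fin n → ℕ) :
    monX n K (b ⊓ g) ∈ Ideal.span (Set.range fun i => monX n K (v i)) ↔
      monX n K b ∈ Ideal.span (Set.range fun i => monX n K (v i)) := by
  simp only [monX_mem_span_monX_iff, le_inf_iff, hv, and_true]

end Monomials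

section Intervals

variable {n : ℕ}

/-- The paper's `Z_d`, as a set of indices. -/
def maxCoords (g d : Fin n → ℕ) : Finset (Fin n) := {k | d k = g k}

lemma mem_maxCoords {g d : Fin n → ℕ} {k : Fin n} : k ∈ maxCoords g d ↔ d k = g k := by
  simp [maxCoords]

/-- The corners `c'` of the Stanley spaces `x^{c'} K[Z_d]` into which `[c, d]` splits. -/
def corners (g c d : Fin n → ℕ) : Finset (Fin n → ℕ) :=
  {cc ∈ Finset.Icc c d | ∀ k, d k = g k → cc k = c k}

lemma mem_corners {g c d cc : Fin n → ℕ} :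
    cc ∈ corners g c d ↔ cc ∈ Set.Icc c d ∧ ∀ k, d k = g k → cc k = c k := by
  simp [corners]

lemma inf_mem_Icc_of_mem_orth {g c d cc b : Fin n → ℕ} (hdg : d ≤ g) (hcc : cc ∈ corners g c d)
    (hb : b ∈ orth cc (maxCoords g d)) : b ⊓ g ∈ Set.Icc c d := by
  obtain ⟨⟨hccl, hccu⟩, hfix⟩ := mem_corners.1 hcc
  refine ⟨fun k => ?_, fun k => ?_⟩ <;>
  · have h1 : cc k ≤ b k := hb.1 k
    have h2 : c k ≤ cc k := hccl k
    have h3 : cc k ≤ d k := hccu k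
    have h4 : d k ≤ g k := hdg k
    simp only [Pi.inf_apply]
    by_cases hk : d k = g k
    · have := hfix k hk
      omega
    · have := hb.2 k (mt mem_maxCoords.1 hk)
      omega

lemma exists_corner_of_inf_mem_Icc {g c d b : Fin n → ℕ} (hdg : d ≤ g)
    (hb : b ⊓ g ∈ Set.Icc c d) : ∃ cc ∈ corners g c d, b ∈ orth cc (maxCoords g d) := by
  refine ⟨fun k => if d k = g k then c k else b k, mem_corners.2 ⟨⟨fun k => ?_, fun k => ?_⟩,
    fun k hk => if_pos hk⟩, fun k => ?_, fun k hk => (if_neg (mt mem_maxCoords.2 hk)).symm⟩ <;>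
  · have h1 : c k ≤ min (b k) (g k) := hb.1 k
    have h2 : min (b k) (g k) ≤ d k := hb.2 k
    have h3 : d k ≤ g k := hdg k
    dsimp only
    split_ifs <;> omega

lemma eq_of_mem_orth_of_mem_orth {c c' b : Fin n → ℕ} {Z : Finset (Fin n)}
    (hZ : ∀ k ∈ Z, c k = c' k) (hb : b ∈ orth c Z) (hb' : b ∈ orth c' Z) : c = c' := by
  funext k
  by_cases hk : k ∈ Z
  · exact hZ k hk
  · rw [← hb.2 k hk, hb'.2 k hk]

lemma orth_inter_Iic {c g : Fin n → ℕ} (hcg : c ≤ g) (Z : Finset (Fin n)) :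
    orth c Z ∩ Set.Iic g = Set.Icc c (Z.piecewise g c) := by
  ext b
  simp only [orth, Set.mem_inter_iff, Set.mem_ofPred_eq, Set.mem_Iic, Set.mem_Icc]
  constructor
  · rintro ⟨⟨hcb, hZ⟩, hbg⟩
    refine ⟨hcb, fun k => ?_⟩
    by_cases hk : k ∈ Z
    · simpa [hk] using hbg k
    · simp [hk, hZ k hk]
  · rintro ⟨hcb, hbd⟩
    have hbd' : ∀ k, b k ≤ Z.piecewise g c k := hbd
    refine ⟨⟨hcb, fun k hk => ?_⟩, fun k => ?_⟩
    · exact le_antisymm (by simpa [hk] using hbd' k) (hcb k)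
    · by_cases hk : k ∈ Z
      · simpa [hk] using hbd' k
      · exact (by simpa [hk] using hbd' k : b k ≤ c k).trans (hcg k)

lemma eq_of_mem_corners_piecewise {g c cc : Fin n → ℕ} {Z : Finset (Fin n)}
    (hcc : cc ∈ corners g c (Z.piecewise g c)) : cc = c := by
  obtain ⟨⟨hcl, hcu⟩, hfix⟩ := mem_corners.1 hcc
  funext k
  by_cases hk : k ∈ Z
  · exact hfix k (by simp [hk])
  · exact le_antisymm (by simpa [hk] using hcu k) (hcl k)

end Intervals

namespace IntervalPartition

variable {n : ℕ} {P : Set (Fin n → ℕ)}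

noncomputable def ofFintype {ι : Type*} [Fintype ι] (c d : ι → Fin n → ℕ) (le : ∀ i, c i ≤ d i)
    (cover : P = ⋃ i, Set.Icc (c i) (d i))
    (disj : Pairwise (Function.onFun Disjoint fun i => Set.Icc (c i) (d i))) :
    IntervalPartition P where
  r := Fintype.card ι
  c := c ∘ (Fintype.equivFin ι).symm
  d := d ∘ (Fintype.equivFin ι).symm
  le _ := le _
  cover := cover.trans ((Fintype.equivFin ι).symm.surjective.iUnion_comp _).symm
  disj := disj.comp_of_injective (Fintype.equivFin ι).symm.injective

lemma Icc_subset (Pt : IntervalPartition P) (i : Fin Pt.r) : Set.Icc (Pt.c i) (Pt.d i) ⊆ P :=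
  fun _ hx => Pt.cover ▸ Set.mem_iUnion.2 ⟨i, hx⟩

lemma eq_of_mem_Icc (Pt : IntervalPartition P) {i j : Fin Pt.r} {x : Fin n → ℕ}
    (hi : x ∈ Set.Icc (Pt.c i) (Pt.d i)) (hj : x ∈ Set.Icc (Pt.c j) (Pt.d j)) : i = j := by
  by_contra hij
  exact Set.disjoint_left.1 (Pt.disj hij) hi hj

lemma le_sigmaP (g : Fin n → ℕ) (Pt : IntervalPartition P) (i : Fin Pt.r) {cc : Fin n → ℕ}
    (hcc : cc ∈ corners g (Pt.c i) (Pt.d i)) : ∑ k, cc k ≤ sigmaP g Pt := by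
  refine le_csSup ?_ ⟨i, cc, (mem_corners.1 hcc).1, (mem_corners.1 hcc).2, rfl⟩
  refine ((Set.finite_iUnion fun i => ((corners g (Pt.c i) (Pt.d i)).finite_toSet.image
    fun cc => ∑ k, cc k)).subset ?_).bddAbove
  rintro _ ⟨i, cc, hIcc, hfix, rfl⟩
  exact Set.mem_iUnion.2 ⟨i, cc, mem_corners.2 ⟨hIcc, hfix⟩, rfl⟩

lemma sigmaP_le {g : Fin n → ℕ} {Pt : IntervalPartition P} {h : ℕ}
    (H : ∀ i, ∀ cc ∈ corners g (Pt.c i) (Pt.d i), ∑ k, cc k ≤ h) : sigmaP g Pt ≤ h := by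
  refine csSup_le' ?_
  rintro _ ⟨i, cc, hIcc, hfix, rfl⟩
  exact H i cc (mem_corners.2 ⟨hIcc, hfix⟩)

end IntervalPartition

namespace StanleyDec

variable {n : ℕ} {K : Type*} [Field K] {I J : Ideal (MvPolynomial (Fin n) K)}

noncomputable def ofFintype {ι : Type*} [Fintype ι] (c : ι → Fin n → ℕ) (Z : ι → Finset (Fin n))
    (cover : {b | monX n K b ∈ J ∧ monX n K b ∉ I} = ⋃ i, orth (c i) (Z i))
    (disj : Pairwise (Function.onFun Disjoint fun i => orth (c i) (Z i))) :
    StanleyDec K I J where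
  r := Fintype.card ι
  c := c ∘ (Fintype.equivFin ι).symm
  Z := Z ∘ (Fintype.equivFin ι).symm
  cover := cover.trans ((Fintype.equivFin ι).symm.surjective.iUnion_comp _).symm
  disj := disj.comp_of_injective (Fintype.equivFin ι).symm.injective

end StanleyDec

section Correspondence

variable {n : ℕ} {K : Type*} [Field K] {I J : Ideal (MvPolynomial (Fin n) K)}

theorem StanleyDec.exists_intervalPartition_sigmaP_le (D : StanleyDec K I J) (g : Fin n → ℕ)
    {h : ℕ} (hD : ∀ i, ∑ k, D.c i k ≤ h) :
    ∃ P : IntervalPartition (charPoset2 K I J g), sigmaP g P ≤ h := by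
  classical
  let ι := {i : Fin D.r // D.c i ≤ g}
  let d : ι → Fin n → ℕ := fun i => (D.Z i).piecewise g (D.c i)
  have hIcc (i : ι) : Set.Icc (D.c i) (d i) = orth (D.c i) (D.Z i) ∩ Set.Iic g :=
    (orth_inter_Iic i.2 _).symm
  have hmem (b : Fin n → ℕ) : (monX n K b ∈ J ∧ monX n K b ∉ I) ↔ ∃ i, b ∈ orth (D.c i) (D.Z i) :=
    Set.ext_iff.1 D.cover b |>.trans Set.mem_iUnion
  refine ⟨IntervalPartition.ofFintype (fun i : ι => D.c i) d
    (fun i => (D.Z i).le_piecewise_of_le_of_le i.2 le_rfl)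
    ?_ ?_, IntervalPartition.sigmaP_le fun _ _ hcc => (eq_of_mem_corners_piecewise hcc).symm ▸ hD _⟩
  · ext b
    simp only [Set.mem_iUnion, hIcc]
    constructor
    · rintro ⟨hbg, hb⟩
      obtain ⟨i, hi⟩ := (hmem b).1 hb
      exact ⟨⟨i, hi.1.trans hbg⟩, hi, hbg⟩
    · rintro ⟨i, hi, hbg⟩
      exact ⟨hbg, (hmem b).2 ⟨i, hi⟩⟩
  · intro i j hij
    simp only [Function.onFun, hIcc]
    exact (D.disj (Subtype.val_injective.ne hij)).mono Set.inter_subset_left Set.inter_subset_left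

theorem IntervalPartition.exists_stanleyDec_le_sigmaP {g : Fin n → ℕ}
    (hmem : ∀ b, (monX n K (b ⊓ g) ∈ J ∧ monX n K (b ⊓ g) ∉ I) ↔
      (monX n K b ∈ J ∧ monX n K b ∉ I))
    (P : IntervalPartition (charPoset2 K I J g)) :
    ∃ D : StanleyDec K I J, ∀ i, ∑ k, D.c i k ≤ sigmaP g P := by
  have hdg (i : Fin P.r) : P.d i ≤ g := (P.Icc_subset i ⟨P.le i, le_rfl⟩).1
  let ι := Σ i : Fin P.r, corners g (P.c i) (P.d i)
  refine ⟨StanleyDec.ofFintype (fun j : ι => j.2.1) (fun j => maxCoords g (P.d j.1)) ?_ ?_,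
    fun j => P.le_sigmaP g _ ((Fintype.equivFin ι).symm j).2.2⟩
  · ext b
    simp only [Set.mem_ofPred_eq, Set.mem_iUnion]
    constructor
    · intro hb
      have hbg : b ⊓ g ∈ charPoset2 K I J g := ⟨inf_le_right, (hmem b).2 hb⟩
      rw [P.cover, Set.mem_iUnion] at hbg
      obtain ⟨i, hi⟩ := hbg
      obtain ⟨cc, hcc, hbcc⟩ := exists_corner_of_inf_mem_Icc (hdg i) hi
      exact ⟨⟨i, cc, hcc⟩, hbcc⟩
    · rintro ⟨⟨i, cc, hcc⟩, hb⟩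
      exact (hmem b).1 (P.Icc_subset i (inf_mem_Icc_of_mem_orth (hdg i) hcc hb)).2
  · rintro ⟨i, cc, hcc⟩ ⟨i', cc', hcc'⟩ hne
    refine Set.disjoint_left.2 fun b hb hb' => hne ?_
    obtain rfl : i = i' := P.eq_of_mem_Icc (inf_mem_Icc_of_mem_orth (hdg i) hcc hb)
      (inf_mem_Icc_of_mem_orth (hdg i') hcc' hb')
    have hagree : ∀ k ∈ maxCoords g (P.d i), cc k = cc' k := fun k hk => by
      rw [(mem_corners.1 hcc).2 k (mem_maxCoords.1 hk),
        (mem_corners.1 hcc').2 k (mem_maxCoords.1 hk)]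
    obtain rfl : cc = cc' := eq_of_mem_orth_of_mem_orth hagree hb hb'
    rfl

end Correspondence

theorem hreg_eq_min_sigma_general (n mi mj : ℕ) (K : Type*) [Field K]
    (a : Fin mi → (Fin n → ℕ)) (bgen : Fin mj → (Fin n → ℕ))
    (I J : Ideal (MvPolynomial (Fin n) K))
    (hI : I = Ideal.span (Set.range fun i => monX n K (a i)))
    (hJ : J = Ideal.span (Set.range fun i => monX n K (bgen i)))
    (g : Fin n → ℕ) (hga : ∀ i, a i ≤ g) (hgb : ∀ i, bgen i ≤ g) :
    hregQ K I J = sInf {s | ∃ P : IntervalPartition (charPoset2 K I J g), s = sigmaP g P} := by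
  have hmem (b : Fin n → ℕ) : (monX n K (b ⊓ g) ∈ J ∧ monX n K (b ⊓ g) ∉ I) ↔
      (monX n K b ∈ J ∧ monX n K b ∉ I) := by
    subst hI hJ
    rw [monX_inf_mem_span_monX_iff hgb, monX_inf_mem_span_monX_iff hga]
  refine Nat.sInf_eq_sInf_of_forall_exists_le ?_ ?_
  · rintro h ⟨D, hD⟩
    obtain ⟨P, hP⟩ := D.exists_intervalPartition_sigmaP_le g hD
    exact ⟨_, ⟨P, rfl⟩, hP⟩
  · rintro _ ⟨P, rfl⟩
    obtain ⟨D, hD⟩ := P.exists_stanleyDec_le_sigmaP hmem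
    exact ⟨_, ⟨D, hD⟩, le_rfl⟩

/-- for monomial ideals `I ⊆ J` with `g` dominating all minimal
generator exponents, `hreg(J/I) = min over partitions P of P^g_{J/I} of σ(P)`. -/
theorem hreg_eq_min_sigma (n mi mj : ℕ) (K : Type*) [Field K]
    (a : Fin mi → (Fin n → ℕ)) (bgen : Fin mj → (Fin n → ℕ))
    (I J : Ideal (MvPolynomial (Fin n) K))
    (hI : I = Ideal.span (Set.range fun i => monX n K (a i)))
    (hJ : J = Ideal.span (Set.range fun i => monX n K (bgen i)))
    (hIJ : I ≤ J)
    (hminI : ∀ i j, i ≠ j → ¬ a i ≤ a j) (hminJ : ∀ i j, i ≠ j → ¬ bgen i ≤ bgen j)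
    (g : Fin n → ℕ) (hga : ∀ i, a i ≤ g) (hgb : ∀ i, bgen i ≤ g) :
    hregQ K I J = sInf {s | ∃ P : IntervalPartition (charPoset2 K I J g), s = sigmaP g P} :=
  hreg_eq_min_sigma_general n mi mj K a bgen I J hI hJ g hga hgb
end
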